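/- arXiv:2502.07652 — 4 statements merged into one kernel-verified Lean document; each statement's English description precedes it below -/
import Mathlib

section
/- Alternative version of Farkas' lemma: For any m×n real matrix K, exactly one of the following holds: (i) there exists x ∈ ℝ^n with x ≥ 0 componentwise and Kx ≫ 0 (all entries strictly positive); (ii) there exists y ∈ ℝ^m with y ≥ 0, y ≠ 0, and yᵀK ≤ 0 componentwise. -/
/-!
The two alternatives exclude each other because `y ⬝ᵥ (K *ᵥ x) = (y ᵥ* K) ⬝ᵥ x` would be both
positive and nonpositive. If the second one fails, the image of the standard simplex under
`y ↦ -(y ᵥ* K)` is a compact convex set disjoint from the nonnegative orthant, and a functional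
separating the two is `v ↦ x ⬝ᵥ v` for some `x ≥ 0` with `K *ᵥ x ≫ 0`.
-/

open Matrix

variable {ι κ : Type*} [Fintype ι] [Fintype κ]

theorem dotProduct_pos_of_nonneg_of_ne_zero {R : Type*} [Semiring R] [PartialOrder R]
    [IsStrictOrderedRing R] {y v : ι → R} (hy : 0 ≤ y) (hy0 : y ≠ 0) (hv : ∀ i, 0 < v i) :
    0 < y ⬝ᵥ v := by
  obtain ⟨i, hi⟩ := Function.ne_iff.mp hy0
  exact Finset.sum_pos' (fun j _ ↦ mul_nonneg (hy j) (hv j).le)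
    ⟨i, Finset.mem_univ i, mul_pos ((hy i).lt_of_ne' hi) (hv i)⟩

theorem not_vecMul_nonpos_of_mulVec_pos {R : Type*} [CommSemiring R] [PartialOrder R]
    [IsStrictOrderedRing R] {K : Matrix ι κ R} {x : κ → R} (hx : 0 ≤ x)
    (hKx : ∀ i, 0 < (K *ᵥ x) i) {y : ι → R} (hy : 0 ≤ y) (hy0 : y ≠ 0) : ¬ y ᵥ* K ≤ 0 := by
  intro hyK
  refine lt_irrefl (0 : R) ?_
  calc
    0 < y ⬝ᵥ (K *ᵥ x) := dotProduct_pos_of_nonneg_of_ne_zero hy hy0 hKx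
    _ = (y ᵥ* K) ⬝ᵥ x := dotProduct_mulVec y K x
    _ ≤ 0 ⬝ᵥ x := dotProduct_le_dotProduct_of_nonneg_right hyK hx
    _ = 0 := zero_dotProduct x

theorem exists_nonneg_mulVec_pos_of_forall_not_vecMul_nonpos (K : Matrix ι κ ℝ)
    (hK : ∀ y : ι → ℝ, 0 ≤ y → y ≠ 0 → ¬ y ᵥ* K ≤ 0) :
    ∃ x : κ → ℝ, 0 ≤ x ∧ ∀ i, 0 < (K *ᵥ x) i := by
  classical
  set S := (fun y ↦ -(y ᵥ* K)) '' stdSimplex ℝ ι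
  have hS_convex : Convex ℝ S :=
    (convex_stdSimplex ℝ ι).linear_image (-K.vecMulLinear)
  have hS_compact : IsCompact S :=
    (isCompact_stdSimplex ℝ ι).image (by fun_prop)
  have hS_disjoint : Disjoint S (ProperCone.positive ℝ (κ → ℝ)) := by
    rw [Set.disjoint_left]
    rintro _ ⟨y, hy, rfl⟩ hyK
    refine hK y hy.1 (fun h ↦ by simpa [h] using hy.2) ?_
    simpa using hyK
  obtain ⟨f, hf_nonneg, hf_neg⟩ :=
    (ProperCone.positive ℝ (κ → ℝ)).hyperplane_separation hS_convex hS_compact hS_disjoint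
  set x := (dotProductEquiv ℝ κ).symm f.toLinearMap
  have hfx : ∀ v, f v = x ⬝ᵥ v := fun v ↦
    (LinearMap.congr_fun ((dotProductEquiv ℝ κ).apply_symm_apply f.toLinearMap) v).symm
  refine ⟨x, fun j ↦ hf_nonneg _ (by simp), fun i ↦ ?_⟩
  have := hf_neg _ ⟨Pi.single i 1, single_mem_stdSimplex ℝ i, rfl⟩
  simp only [hfx, single_one_vecMul, dotProduct_neg, Left.neg_neg_iff] at this
  rwa [dotProduct_comm] at this

theorem farkas_lemma_alternative
    (n m : ℕ) (K : Matrix (Fin m) (Fin n) ℝ) :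
    Xor'
      (∃ x : Fin n → ℝ, (∀ i, 0 ≤ x i) ∧ ∀ i, 0 < K.mulVec x i)
      (∃ y : Fin m → ℝ, (∀ i, 0 ≤ y i) ∧ y ≠ 0 ∧ ∀ j, K.vecMul y j ≤ 0) := by
  refine xor_iff_iff_not.mpr ⟨?_, fun h ↦ ?_⟩
  · rintro ⟨x, hx, hKx⟩ ⟨y, hy, hy0, hyK⟩
    exact not_vecMul_nonpos_of_mulVec_pos hx hKx hy hy0 hyK
  · exact exists_nonneg_mulVec_pos_of_forall_not_vecMul_nonpos K
      fun y hy hy0 hyK ↦ h ⟨y, hy, hy0, hyK⟩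
end

section
/- Let a,b,c,d > 0 with d > b > c > a (so strategy B strictly dominates A and A is strictly insuperable), and for population size N ≥ 2 define ρ_k = (a(k−1)+b(N−k)) / (ck+d(N−k−1)) for k = 1,…,N−1. If N < min{(d−a)/(d−b), (d−a)/(c−a)}, then ρ_k > 1 for all k = 1,…,N−1. -/
theorem relative_fitness_gt_one_small_population
    (a b c d : ℝ) (ha : 0 < a) (hac : a < c) (hcb : c < b) (hbd : b < d)
    (N : ℕ) (hN : 2 ≤ N)
    (hsmall : (N : ℝ) < min ((d - a) / (d - b)) ((d - a) / (c - a))) :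
    ∀ k, 1 ≤ k → k ≤ N - 1 →
      1 < (a * ((k : ℝ) - 1) + b * ((N : ℝ) - k)) /
            (c * k + d * ((N : ℝ) - k - 1)) := by
  intro k hk1 hk2
  have hkN : (k : ℝ) ≤ (N : ℝ) - 1 := by
    have : k + 1 ≤ N := by omega
    have := (Nat.cast_le (α := ℝ)).2 this
    push_cast at this; linarith
  have hk1' : (1 : ℝ) ≤ k := by exact_mod_cast hk1
  have h1 := (lt_min_iff.1 hsmall).1
  have h2 := (lt_min_iff.1 hsmall).2
  have hdb : 0 < d - b := by linarith
  have hca : 0 < c - a := by linarith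
  have h1' : (N : ℝ) * (d - b) < d - a := by
    rw [lt_div_iff₀ hdb] at h1; linarith
  have h2' : (N : ℝ) * (c - a) < d - a := by
    rw [lt_div_iff₀ hca] at h2; linarith
  have hden : 0 < c * k + d * ((N : ℝ) - k - 1) := by nlinarith
  rw [lt_div_iff₀ hden]
  nlinarith [mul_nonneg (sub_nonneg.2 hkN) (sub_pos.2 h1').le,
    mul_nonneg (by linarith : (0:ℝ) ≤ (k:ℝ)) (sub_pos.2 h2').le]
end

section
/- Let a,b,c,d > 0 with d > b > c > a, and define ρ_k = (a(k−1)+b(N−k))/(ck+d(N−k−1)) for k = 1,…,N−1. If N > max{(d−a)/(d−b), (d−a)/(c−a)}, then ρ_k < 1 for all k = 1,…,N−1, and consequently the Moran fixation probability F_i = (Σ_{j=1}^{i}Π_{k=1}^{j−1}ρ_k^{−1})/(Σ_{j=1}^{N}Π_{k=1}^{j−1}ρ_k^{−1}) satisfies F_i < i/N for every 1 ≤ i ≤ N−1. -/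
set_option maxHeartbeats 800000


open Finset

theorem fixation_below_neutral_large_population
    (a b c d : ℝ) (ha : 0 < a) (hac : a < c) (hcb : c < b) (hbd : b < d)
    (N : ℕ) (hN : 2 ≤ N)
    (hlarge : (N : ℝ) > max ((d - a) / (d - b)) ((d - a) / (c - a)))
    (ρ : ℕ → ℝ)
    (hρdef : ∀ k, ρ k = (a * ((k : ℝ) - 1) + b * ((N : ℝ) - k)) /
        (c * k + d * ((N : ℝ) - k - 1))) :
    (∀ k, 1 ≤ k → k ≤ N - 1 → ρ k < 1) ∧
    (∀ i, 1 ≤ i → i ≤ N - 1 →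
      (∑ j ∈ Icc 1 i, ∏ k ∈ Icc 1 (j - 1), (ρ k)⁻¹) /
        (∑ j ∈ Icc 1 N, ∏ k ∈ Icc 1 (j - 1), (ρ k)⁻¹) < (i : ℝ) / N) := by
  have hdb : (0:ℝ) < d - b := by linarith
  have hca : (0:ℝ) < c - a := by linarith
  have h1 : (d - a) / (d - b) < N := lt_of_le_of_lt (le_max_left _ _) hlarge
  have h2 : (d - a) / (c - a) < N := lt_of_le_of_lt (le_max_right _ _) hlarge
  have hN1 : (d - b) * N > d - a := by
    rw [div_lt_iff₀ hdb] at h1; linarith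
  have hN2 : (c - a) * N > d - a := by
    rw [div_lt_iff₀ hca] at h2; linarith
  -- bounds for k in range
  have hden : ∀ k : ℕ, 1 ≤ k → k ≤ N - 1 →
      0 < c * k + d * ((N : ℝ) - k - 1) := by
    intro k hk1 hk2
    have hk1' : (1:ℝ) ≤ k := by exact_mod_cast hk1
    have hkN : k + 1 ≤ N := by omega
    have hkN' : (k:ℝ) + 1 ≤ N := by exact_mod_cast hkN
    have hc : 0 < c := by linarith
    nlinarith
  have hnum : ∀ k : ℕ, 1 ≤ k → k ≤ N - 1 →
      0 < a * ((k : ℝ) - 1) + b * ((N : ℝ) - k) := by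
    intro k hk1 hk2
    have hk1' : (1:ℝ) ≤ k := by exact_mod_cast hk1
    have hkN : k + 1 ≤ N := by omega
    have hkN' : (k:ℝ) + 1 ≤ N := by exact_mod_cast hkN
    have hb : 0 < b := by linarith
    nlinarith
  have hρlt : ∀ k : ℕ, 1 ≤ k → k ≤ N - 1 → ρ k < 1 := by
    intro k hk1 hk2
    rw [hρdef k]
    rw [div_lt_one (hden k hk1 hk2)]
    have hk1' : (1:ℝ) ≤ k := by exact_mod_cast hk1
    have hkN : k + 1 ≤ N := by omega
    have hkN' : (k:ℝ) + 1 ≤ N := by exact_mod_cast hkN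
    -- need Ψ(k) < 0 where Ψ(k) = ((d-b)-(c-a))k - (d-b)N + (d-a)
    rcases le_or_gt ((d - b) - (c - a)) 0 with hα | hα
    · nlinarith [mul_le_of_le_one_right (le_of_lt hdb) (le_refl (1:ℝ))]
    · nlinarith
  have hρpos : ∀ k : ℕ, 1 ≤ k → k ≤ N - 1 → 0 < ρ k := by
    intro k hk1 hk2
    rw [hρdef k]
    exact div_pos (hnum k hk1 hk2) (hden k hk1 hk2)
  have hinv1 : ∀ k : ℕ, 1 ≤ k → k ≤ N - 1 → 1 < (ρ k)⁻¹ := by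
    intro k hk1 hk2
    exact (one_lt_inv₀ (hρpos k hk1 hk2)).mpr (hρlt k hk1 hk2)
  refine ⟨hρlt, ?_⟩
  intro i hi1 hi2
  set P : ℕ → ℝ := fun j => ∏ k ∈ Icc 1 (j - 1), (ρ k)⁻¹ with hP
  have hPpos : ∀ j : ℕ, j ≤ N → 0 < P j := by
    intro j hj
    apply Finset.prod_pos
    intro k hk
    simp only [Finset.mem_Icc] at hk
    exact inv_pos.mpr (hρpos k hk.1 (by omega))
  have hPmono : ∀ j i' : ℕ, j ≤ i' → i' ≤ N → P j ≤ P i' := by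
    intro j i' hji hiN
    simp only [hP]
    have hsub : Icc 1 (j - 1) ⊆ Icc 1 (i' - 1) := Finset.Icc_subset_Icc_right (by omega)
    rw [← Finset.prod_sdiff hsub]
    have hone : (1:ℝ) ≤ ∏ k ∈ Icc 1 (i' - 1) \ Icc 1 (j - 1), (ρ k)⁻¹ := by
      rw [show (1:ℝ) = ∏ k ∈ Icc 1 (i' - 1) \ Icc 1 (j - 1), (1:ℝ) by simp]
      apply Finset.prod_le_prod (fun k _ => zero_le_one)
      intro k hk
      have hk' := Finset.mem_sdiff.mp hk
      have hk2 := Finset.mem_Icc.mp hk'.1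
      exact le_of_lt (hinv1 k hk2.1 (by omega))
    have hppos : 0 < ∏ k ∈ Icc 1 (j - 1), (ρ k)⁻¹ := by
      apply Finset.prod_pos
      intro k hk
      have hk2 := Finset.mem_Icc.mp hk
      exact inv_pos.mpr (hρpos k hk2.1 (by omega))
    nlinarith
  have hPstep : ∀ i' : ℕ, 1 ≤ i' → i' ≤ N - 1 → P i' < P (i' + 1) := by
    intro i' hi'1 hi'2
    obtain ⟨m, rfl⟩ : ∃ m, i' = m + 1 := ⟨i' - 1, by omega⟩
    have : P (m + 1 + 1) = P (m + 1) * (ρ (m + 1))⁻¹ := by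
      simp only [hP, Nat.add_sub_cancel]
      exact Finset.prod_Icc_succ_top (by omega) _
    rw [this]
    have hp := hPpos (m + 1) (by omega)
    nlinarith [hinv1 (m + 1) (by omega) (by omega)]
  -- sums
  have hiN : i + 1 ≤ N := by omega
  have hsum1 : ∑ j ∈ Icc 1 i, P j ≤ (i : ℝ) * P i := by
    have := Finset.sum_le_card_nsmul (Icc 1 i) P (P i)
      (fun j hj => by
        simp only [Finset.mem_Icc] at hj
        exact hPmono j i hj.2 (by omega))
    rwa [Nat.card_Icc, Nat.add_sub_cancel, nsmul_eq_mul] at this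
  have hsum2 : ((N - i : ℕ) : ℝ) * P (i + 1) ≤ ∑ j ∈ Icc (i + 1) N, P j := by
    have := Finset.card_nsmul_le_sum (Icc (i + 1) N) P (P (i + 1))
      (fun j hj => by
        simp only [Finset.mem_Icc] at hj
        exact hPmono (i + 1) j hj.1 hj.2)
    rwa [Nat.card_Icc, nsmul_eq_mul, show N + 1 - (i + 1) = N - i by omega] at this
  have hsplit : ∑ j ∈ Icc 1 N, P j = ∑ j ∈ Icc 1 i, P j + ∑ j ∈ Icc (i + 1) N, P j := by
    rw [show Icc 1 N = Ioc 0 N from Finset.Icc_add_one_left_eq_Ioc 0 N,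
        show Icc 1 i = Ioc 0 i from Finset.Icc_add_one_left_eq_Ioc 0 i,
        show Icc (i + 1) N = Ioc i N from Finset.Icc_add_one_left_eq_Ioc i N]
    exact (Finset.sum_Ioc_consecutive _ (Nat.zero_le i) (by omega)).symm
  have hSipos : 0 < ∑ j ∈ Icc 1 i, P j := by
    apply Finset.sum_pos
    · intro j hj
      simp only [Finset.mem_Icc] at hj
      exact hPpos j (by omega)
    · exact ⟨1, by simp [Finset.mem_Icc]; omega⟩
  have hTpos : 0 < ∑ j ∈ Icc (i + 1) N, P j := by
    apply Finset.sum_pos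
    · intro j hj
      simp only [Finset.mem_Icc] at hj
      exact hPpos j hj.2
    · exact ⟨i + 1, by simp [Finset.mem_Icc]; omega⟩
  have hSNpos : 0 < ∑ j ∈ Icc 1 N, P j := by rw [hsplit]; linarith
  have hNpos : (0:ℝ) < N := by positivity
  rw [div_lt_div_iff₀ hSNpos hNpos, hsplit]
  have hcast : ((N - i : ℕ) : ℝ) = (N : ℝ) - i := by
    have : i ≤ N := by omega
    push_cast [this]; ring
  rw [hcast] at hsum2
  have hi1' : (1:ℝ) ≤ i := by exact_mod_cast hi1
  have hiN' : (i:ℝ) + 1 ≤ N := by exact_mod_cast hiN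
  have hstep := hPstep i hi1 hi2
  have hPipos := hPpos i (by omega)
  nlinarith [mul_le_mul_of_nonneg_left hsum2 (le_of_lt (lt_of_lt_of_le zero_lt_one hi1')),
    mul_lt_mul_of_pos_left hstep (show (0:ℝ) < (i:ℝ) * ((N:ℝ) - i) by nlinarith),
    mul_le_mul_of_nonneg_right hsum1 (show (0:ℝ) ≤ (N:ℝ) - i by linarith)]
end

section
/- One-period market arbitrage characterization: Let L ∈ ℝ^{n×m} be the cash-flow matrix of a conical market (portfolios θ must satisfy θ ≥ 0), with prices pᵀ = −yᵀL determined by the market's insuperable strategy y ∈ Δ^{m−1} (yᵀL ≤ 0). Then there exists no arbitrage portfolio (no x ∈ Δ^{n−1}, normalized portfolio, with Lx > 0 and pᵀx = 0, and none with Lx ≥ 0 and pᵀx < 0) if and only if every insuperable strategy x for the trader (Lx ≥ 0) has trivial outcome (Lx = 0). -/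
open Matrix

theorem no_arbitrage_iff_trivial_outcome
    (n m : ℕ) (L : Matrix (Fin m) (Fin n) ℝ)
    (y : Fin m → ℝ) (hy : y ∈ stdSimplex ℝ (Fin m))
    (hins : ∀ j, L.vecMul y j ≤ 0)
    (p : Fin n → ℝ) (hp : p = -(L.vecMul y)) :
    ((¬ ∃ x ∈ stdSimplex ℝ (Fin n),
        ((∀ i, 0 ≤ L.mulVec x i) ∧ L.mulVec x ≠ 0) ∧ p ⬝ᵥ x = 0) ∧
     (¬ ∃ x ∈ stdSimplex ℝ (Fin n),
        (∀ i, 0 ≤ L.mulVec x i) ∧ p ⬝ᵥ x < 0)) ↔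
    (∀ x ∈ stdSimplex ℝ (Fin n), (∀ i, 0 ≤ L.mulVec x i) → L.mulVec x = 0) := by
  have hpx : ∀ x : Fin n → ℝ, p ⬝ᵥ x = -(y ⬝ᵥ L.mulVec x) := by
    intro x
    rw [hp, neg_dotProduct, Matrix.dotProduct_mulVec]
  constructor
  · rintro ⟨h1, h2⟩ x hx hLx
    by_contra hne
    have hyx : 0 ≤ y ⬝ᵥ L.mulVec x :=
      Finset.sum_nonneg fun i _ => mul_nonneg (hy.1 i) (hLx i)
    rcases lt_or_eq_of_le hyx with hlt | heq
    · exact h2 ⟨x, hx, hLx, by rw [hpx]; linarith⟩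
    · exact h1 ⟨x, hx, ⟨hLx, hne⟩, by rw [hpx, ← heq, neg_zero]⟩
  · intro h
    constructor
    · rintro ⟨x, hx, ⟨hLx, hne⟩, -⟩
      exact hne (h x hx hLx)
    · rintro ⟨x, hx, hLx, hlt⟩
      have := h x hx hLx
      rw [hpx, this, dotProduct_zero, neg_zero] at hlt
      exact lt_irrefl 0 hlt
end
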